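/- arXiv:1109.2171 — 3 statements merged into one kernel-verified Lean document; each statement's English description precedes it below -/
import Mathlib

section
/- The N × N matrix B with entries B_{kl} = e^{-p} exp(p e^{2πi(l-k)/N}), for p > 0, is a Hermitian circulant matrix whose eigenvalues are λ̂_j = N e^{-p} ∑_{q=0}^{∞} p^{j+qN} / (j+qN)! for j = 0,…,N-1. In particular all eigenvalues are strictly positive and B is invertible. -/
/-
With ζ = e^{2πi/N}, the matrix B is circulant with first column c_m = e^{-p} exp(p ζ^{-m}), so the
Fourier vectors (ζ^{-jk})_k are eigenvectors with eigenvalues ∑_m c_m ζ^{jm}. Expanding the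
exponential, the orthogonality relation ∑_m ζ^{(j-n)m} = N·[n ≡ j mod N] keeps exactly the terms
p^n/n! with n ≡ j, which gives λ̂_j > 0. The Fourier vectors are the rows of a Vandermonde matrix
at distinct nodes, hence a basis, so B is invertible.
-/

open Matrix Complex Nat Real

section RootsOfUnity

variable {K : Type*} [Field K] {N : ℕ} {ζ : K}

theorem zpow_emod_of_pow_eq_one (hζ : ζ ^ N = 1) (m : ℤ) : ζ ^ (m % N) = ζ ^ m := by
  rcases eq_or_ne N 0 with rfl | hN
  · simp
  have hζ0 : ζ ≠ 0 := ne_zero_pow hN (hζ ▸ one_ne_zero)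
  conv_rhs => rw [← Int.emod_add_mul_ediv m N]
  rw [zpow_add₀ hζ0, _root_.zpow_mul, zpow_natCast, hζ, _root_.one_zpow, mul_one]

theorem zpow_coe_fin_sub_of_pow_eq_one (hζ : ζ ^ N = 1) (k l : Fin N) :
    ζ ^ ((k - l : Fin N) : ℤ) = ζ ^ ((k : ℤ) - l) := by
  rw [Fin.coe_int_sub_eq_mod, zpow_emod_of_pow_eq_one hζ]

theorem IsPrimitiveRoot.sum_fin_zpow_mul (hζ : IsPrimitiveRoot ζ N) (t : ℤ) :
    ∑ l : Fin N, ζ ^ (t * l) = if (N : ℤ) ∣ t then (N : K) else 0 := by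
  simp_rw [_root_.zpow_mul, zpow_natCast]
  rw [Fin.sum_univ_eq_sum_range (fun l => (ζ ^ t) ^ l)]
  split_ifs with ht
  · simp [(hζ.zpow_eq_one_iff_dvd t).2 ht]
  · have hζt : ζ ^ t ≠ 1 := mt (hζ.zpow_eq_one_iff_dvd t).1 ht
    rw [geom_sum_eq hζt, ← zpow_natCast, ← _root_.zpow_mul, mul_comm, _root_.zpow_mul,
      zpow_natCast, hζ.pow_eq_one, _root_.one_zpow, sub_self, zero_div]

theorem Matrix.circulant_mulVec_zpow [NeZero N] (hζ : ζ ^ N = 1) (c : Fin N → K) (j : ℤ) :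
    circulant c *ᵥ (fun k : Fin N => ζ ^ (-(j * k))) =
      (∑ m, c m * ζ ^ (j * m)) • fun k : Fin N => ζ ^ (-(j * k)) := by
  ext k
  have hζ0 : ζ ≠ 0 := ne_zero_pow (NeZero.ne N) (hζ ▸ one_ne_zero)
  simp only [mulVec, dotProduct, circulant_apply, Pi.smul_apply, smul_eq_mul, Finset.sum_mul]
  refine Fintype.sum_equiv (Equiv.subLeft k) _ _ fun l => ?_
  rw [Equiv.subLeft_apply, _root_.zpow_mul' ζ j, zpow_coe_fin_sub_of_pow_eq_one hζ,
    ← _root_.zpow_mul', mul_assoc, ← zpow_add₀ hζ0]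
  ring_nf

theorem IsPrimitiveRoot.linearIndependent_zpow_neg_mul (hζ : IsPrimitiveRoot ζ N) :
    LinearIndependent K fun j k : Fin N => ζ ^ (-((j : ℤ) * k)) := by
  have hrow : (fun j k : Fin N => ζ ^ (-((j : ℤ) * k))) =
      (vandermonde fun j : Fin N => ζ⁻¹ ^ (j : ℕ)).row := by
    ext j k
    simp [vandermonde_apply, ← zpow_natCast, ← _root_.zpow_mul]
  rw [hrow, linearIndependent_rows_iff_isUnit, isUnit_iff_isUnit_det, isUnit_iff_ne_zero,
    det_vandermonde_ne_zero_iff]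
  exact fun a b h => Fin.ext (hζ.inv.pow_inj a.isLt b.isLt h)

end RootsOfUnity

theorem tsum_ite_mod_eq {M : Type*} [AddCommMonoid M] [TopologicalSpace M] (f : ℕ → M)
    {N j : ℕ} (hj : j < N) :
    ∑' n, (if n % N = j then f n else 0) = ∑' q, f (j + q * N) := by
  have hinj : Function.Injective fun q => j + q * N :=
    (add_right_injective j).comp (mul_left_injective₀ (by omega))
  rw [← hinj.tsum_eq]
  · refine tsum_congr fun q => ?_
    simp [Nat.add_mul_mod_self_right, Nat.mod_eq_of_lt hj]
  · intro n hn
    have hn : n % N = j := by by_contra h; simp [h] at hn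
    exact ⟨n / N, by simp only [← hn, mul_comm (n / N)]; exact Nat.mod_add_div n N⟩

theorem IsPrimitiveRoot.sum_exp_mul_zpow {N : ℕ} {ζ : ℂ} (hζ : IsPrimitiveRoot ζ N) (z : ℂ)
    {j : ℕ} (hj : j < N) :
    ∑ m : Fin N, exp (z * ζ ^ (-(m : ℤ))) * ζ ^ ((j : ℤ) * m) =
      N * ∑' q : ℕ, z ^ (j + q * N) / (j + q * N)! := by
  have hζ0 : ζ ≠ 0 := hζ.ne_zero (by omega)
  have hexp (w : ℂ) : exp w = ∑' n : ℕ, w ^ n / n ! := by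
    rw [exp_eq_exp_ℂ, NormedSpace.exp_eq_tsum_div]
  have hterm (m : Fin N) (n : ℕ) : (z * ζ ^ (-(m : ℤ))) ^ n / n ! * ζ ^ ((j : ℤ) * m) =
      z ^ n / n ! * ζ ^ (((j : ℤ) - n) * m) := by
    rw [mul_pow, ← zpow_natCast (ζ ^ _) n, ← _root_.zpow_mul, mul_div_right_comm, mul_assoc,
      ← zpow_add₀ hζ0]
    ring_nf
  have hsum (m : Fin N) :
      Summable fun n : ℕ => (z * ζ ^ (-(m : ℤ))) ^ n / n ! * ζ ^ ((j : ℤ) * m) :=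
    (NormedSpace.expSeries_div_summable (𝔸 := ℂ) (z * ζ ^ (-(m : ℤ)))).mul_right _
  have hfilter (n : ℕ) : (N : ℤ) ∣ (j : ℤ) - n ↔ n % N = j := by
    rw [← Nat.modEq_iff_dvd, Nat.ModEq, Nat.mod_eq_of_lt hj]
  calc ∑ m : Fin N, exp (z * ζ ^ (-(m : ℤ))) * ζ ^ ((j : ℤ) * m)
      = ∑ m : Fin N, ∑' n, (z * ζ ^ (-(m : ℤ))) ^ n / n ! * ζ ^ ((j : ℤ) * m) := by
        simp_rw [hexp, tsum_mul_right]
    _ = ∑' n, ∑ m : Fin N, (z * ζ ^ (-(m : ℤ))) ^ n / n ! * ζ ^ ((j : ℤ) * m) :=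
        (Summable.tsum_finsetSum fun m _ => hsum m).symm
    _ = ∑' n, z ^ n / n ! * ∑ l : Fin N, ζ ^ (((j : ℤ) - n) * l) := by
        simp_rw [hterm, Finset.mul_sum]
    _ = ∑' n, if n % N = j then N * (z ^ n / n !) else 0 := by
        refine tsum_congr fun n => ?_
        simp only [hζ.sum_fin_zpow_mul, hfilter]
        split_ifs <;> ring
    _ = N * ∑' q : ℕ, z ^ (j + q * N) / (j + q * N)! := by
        rw [tsum_ite_mod_eq _ hj, tsum_mul_left]

theorem tsum_pow_div_factorial_add_mul_pos {x : ℝ} (hx : 0 < x) (j : ℕ) {N : ℕ} (hN : N ≠ 0) :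
    0 < ∑' q : ℕ, x ^ (j + q * N) / (j + q * N)! := by
  have hs : Summable fun q : ℕ => x ^ (j + q * N) / (j + q * N)! :=
    (Real.summable_pow_div_factorial x).comp_injective
      ((add_right_injective j).comp (mul_left_injective₀ hN))
  exact hs.tsum_pos (fun q => by positivity) 0 (by positivity)

theorem Matrix.isUnit_of_linearIndependent_eigenvectors {n K : Type*} [Fintype n] [DecidableEq n]
    [Field K] {A : Matrix n n K} {v : n → n → K} (hv : LinearIndependent K v) {μ : n → K}
    (hμ : ∀ i, μ i ≠ 0) (hAv : ∀ i, A *ᵥ v i = μ i • v i) : IsUnit A := by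
  set F : Matrix n n K := of fun k i => v i k
  have hF : IsUnit F := linearIndependent_cols_iff_isUnit.1 hv
  have hAF : A * F = F * diagonal μ := by
    ext k i
    rw [mul_diagonal, mul_comm]
    simpa [F, mul_apply, mulVec, dotProduct] using congrFun (hAv i) k
  have hD : IsUnit (diagonal μ) := isUnit_diagonal.2 (Pi.isUnit_iff.2 fun i => (hμ i).isUnit)
  exact isUnit_of_mul_isUnit_left (hAF ▸ hF.mul hD)

theorem exp_two_pi_I_mul_intCast_div (N : ℕ) (t : ℤ) :
    exp (2 * π * I * t / N) = exp (2 * π * I / N) ^ t := by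
  rw [← exp_int_mul]
  ring_nf

section CoherentStateGram

variable (N : ℕ) (p : ℝ)

/-- The Gram matrix `⟨z_k|z_l⟩` of canonical coherent states at `z_k = √p e^{2πik/N}`. -/
noncomputable def coherentGram : Matrix (Fin N) (Fin N) ℂ :=
  of fun k l => (Real.exp (-p) : ℂ) * exp (p * exp (2 * π * I * ((l : ℂ) - k) / N))

noncomputable def coherentGramEigenvalue (j : ℕ) : ℝ :=
  N * Real.exp (-p) * ∑' q : ℕ, p ^ (j + q * N) / (j + q * N)!

theorem coherentGram_isHermitian : (coherentGram N p).IsHermitian := by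
  refine IsHermitian.ext fun k l => ?_
  simp only [coherentGram, of_apply, star_def, map_mul, conj_ofReal, ← Complex.exp_conj, map_div₀,
    conj_I, map_sub, map_natCast, map_ofNat]
  ring_nf

theorem coherentGram_eq_circulant [NeZero N] :
    coherentGram N p = circulant fun m : Fin N =>
      (Real.exp (-p) : ℂ) * exp (p * exp (2 * π * I / N) ^ (-(m : ℤ))) := by
  ext k l
  rw [coherentGram, of_apply, circulant_apply, _root_.zpow_neg,
    zpow_coe_fin_sub_of_pow_eq_one (isPrimitiveRoot_exp N (NeZero.ne N)).pow_eq_one,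
    ← _root_.zpow_neg, neg_sub, ← exp_two_pi_I_mul_intCast_div]
  push_cast
  rfl

theorem coherentGram_mulVec_zpow [NeZero N] (j : Fin N) :
    coherentGram N p *ᵥ (fun k : Fin N => exp (2 * π * I / N) ^ (-((j : ℤ) * k))) =
      (coherentGramEigenvalue N p j : ℂ) •
        fun k : Fin N => exp (2 * π * I / N) ^ (-((j : ℤ) * k)) := by
  have hζ := isPrimitiveRoot_exp N (NeZero.ne N)
  rw [coherentGram_eq_circulant, circulant_mulVec_zpow hζ.pow_eq_one]
  simp only [mul_assoc (Real.exp (-p) : ℂ), ← Finset.mul_sum]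
  rw [hζ.sum_exp_mul_zpow p j.isLt, coherentGramEigenvalue]
  push_cast [ofReal_tsum]
  congr 1
  ring

theorem coherentGramEigenvalue_pos (hN : N ≠ 0) (hp : 0 < p) (j : ℕ) :
    0 < coherentGramEigenvalue N p j :=
  mul_pos (mul_pos (by positivity) (Real.exp_pos _)) (tsum_pow_div_factorial_add_mul_pos hp j hN)

theorem coherentGram_isUnit [NeZero N] (hp : 0 < p) : IsUnit (coherentGram N p) :=
  isUnit_of_linearIndependent_eigenvectors
    (isPrimitiveRoot_exp N (NeZero.ne N)).linearIndependent_zpow_neg_mul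
    (fun j => ofReal_ne_zero.2 (coherentGramEigenvalue_pos N p (NeZero.ne N) hp j).ne')
    (coherentGram_mulVec_zpow N p)

end CoherentStateGram

theorem stmt5 (N : ℕ) (hN : 0 < N) (p : ℝ) (hp : 0 < p)
    (B : Matrix (Fin N) (Fin N) ℂ)
    (hB : ∀ k l : Fin N, B k l = (Real.exp (-p) : ℂ) *
      Complex.exp ((p : ℂ) * Complex.exp (2 * Real.pi * Complex.I * ((l : ℂ) - (k : ℂ)) / (N : ℂ))))
    (lamhat : Fin N → ℝ)
    (hlam : ∀ j : Fin N, lamhat j = (N : ℝ) * Real.exp (-p) *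
      ∑' q : ℕ, p ^ ((j : ℕ) + q * N) / Nat.factorial ((j : ℕ) + q * N)) :
    B.IsHermitian ∧
    (∃ c : Fin N → ℂ, B = Matrix.circulant c) ∧
    (∀ j : Fin N,
      B.mulVec (fun k : Fin N => Complex.exp (-(2 * Real.pi * Complex.I) * (j : ℂ) * (k : ℂ) / (N : ℂ))) =
        ((lamhat j : ℂ)) • (fun k : Fin N => Complex.exp (-(2 * Real.pi * Complex.I) * (j : ℂ) * (k : ℂ) / (N : ℂ)))) ∧
    (∀ j : Fin N, 0 < lamhat j) ∧ IsUnit B := by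
  have : NeZero N := ⟨hN.ne'⟩
  obtain rfl : B = coherentGram N p := Matrix.ext hB
  obtain rfl : lamhat = fun j : Fin N => coherentGramEigenvalue N p j := funext hlam
  have hfourier (j : Fin N) : (fun k : Fin N => exp (-(2 * π * I) * j * k / N)) =
      fun k : Fin N => exp (2 * π * I / N) ^ (-((j : ℤ) * k)) := by
    funext k
    rw [← exp_two_pi_I_mul_intCast_div]
    push_cast
    ring_nf
  refine ⟨coherentGram_isHermitian N p, ⟨_, coherentGram_eq_circulant N p⟩, fun j => ?_,
    fun j => coherentGramEigenvalue_pos N p hN.ne' hp j, coherentGram_isUnit N p hp⟩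
  rw [hfourier]
  exact coherentGram_mulVec_zpow N p j
end

section
/- For p > 0 and j, s, t nonnegative integers with j ≤ N-1, the matrix elements of the projector P_S onto the span of the N coherent states |z_k⟩, z_k = √p e^{2πik/N}, in the Fock basis are P_{mn} = √(λ_m λ_n) / λ̂_{n mod N} if (n-m) mod N = 0 and 0 otherwise, where λ_n = N e^{-p} p^n/n! and λ̂_j = ∑_{q=0}^∞ λ_{j+qN}. Equivalently, for m = j+sN and n = j+tN, P_{mn} = j! p^{(s+t)N/2} / (√((j+sN)!) √((j+tN)!) (1+ν_j(p,N))). -/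
/-!
The Gram matrix `B = T T*` of the coherent states is circulant, `B k l = e^{-p} exp (p ζ^{l-k})`
with `ζ = e^{2πi/N}`, so the discrete Fourier transform diagonalises it. Expanding the exponential
and summing over the `N`-th roots of unity aliases the weights `λ_n` onto residue classes mod `N`:
the eigenvalues of `B` are the `λ̂_j`. Inverting `B` in the Fourier basis, the entry
`P m n = c_m c_n ∑ ζ^{lm} (B⁻¹) l k ζ^{-kn}` collapses, by orthogonality of characters, to
`N c_m c_n / λ̂_{n mod N}` when `m ≡ n mod N` and to `0` otherwise. Splitting off the `q = 0`
term of `λ̂_j = λ_j (1 + ν_j)` gives the second form.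
-/

theorem Fin.sum_ite_intCast_modEq {M : Type*} [AddCommMonoid M] {N : ℕ} {x : ℤ} {c₀ : Fin N}
    (h₀ : (c₀ : ℤ) ≡ x [ZMOD N]) (f : Fin N → M) :
    ∑ c : Fin N, (if (c : ℤ) ≡ x [ZMOD N] then f c else 0) = f c₀ := by
  rw [Finset.sum_eq_single c₀ (fun c _ hc => if_neg fun h => hc ?_) (by simp), if_pos h₀]
  exact Fin.ext (Nat.ModEq.eq_of_lt_of_lt (Int.natCast_modEq_iff.1 (h.trans h₀.symm)) c.2 c₀.2)

theorem Fin.exists_intCast_modEq {N : ℕ} [NeZero N] (x : ℤ) :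
    ∃ c : Fin N, (c : ℤ) ≡ x [ZMOD N] := by
  have hN : (0 : ℤ) < N := by exact_mod_cast Nat.pos_of_neZero N
  refine ⟨⟨(x % N).toNat, by have := Int.emod_lt_of_pos x hN; omega⟩, ?_⟩
  simp only [Int.toNat_of_nonneg (Int.emod_nonneg x hN.ne')]
  exact Int.mod_modEq x N

namespace IsPrimitiveRoot

variable {K : Type*} [Field K] {N : ℕ} {ζ : K}

theorem sum_fin_zpow_mul_sub (hζ : IsPrimitiveRoot ζ N) (a b : ℤ) :
    ∑ c : Fin N, ζ ^ ((c : ℤ) * (a - b)) = if b ≡ a [ZMOD N] then (N : K) else 0 := by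
  have hpow (c : Fin N) : ζ ^ ((c : ℤ) * (a - b)) = (ζ ^ (a - b)) ^ (c : ℕ) := by
    rw [mul_comm, zpow_mul, zpow_natCast]
  rw [Fintype.sum_congr _ _ hpow, Fin.sum_univ_eq_sum_range (fun i => (ζ ^ (a - b)) ^ i)]
  split_ifs with h <;> rw [Int.modEq_iff_dvd, ← hζ.zpow_eq_one_iff_dvd] at h
  · simp only [h, one_pow, Finset.sum_const, Finset.card_range, nsmul_eq_mul, mul_one]
  · rw [geom_sum_eq h, ← zpow_natCast, ← zpow_mul, mul_comm, zpow_mul, hζ.zpow_eq_one,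
      one_zpow, sub_self, zero_div]

theorem sum_fin_zpow_mul_sub_eq_ite (hζ : IsPrimitiveRoot ζ N) (k l : Fin N) :
    ∑ c : Fin N, ζ ^ ((c : ℤ) * (k - l)) = if k = l then (N : K) else 0 := by
  rw [hζ.sum_fin_zpow_mul_sub]
  congr 1
  exact propext ⟨fun h =>
    Fin.ext (Nat.ModEq.eq_of_lt_of_lt (Int.natCast_modEq_iff.1 h) l.2 k.2).symm,
    fun h => h ▸ Int.ModEq.refl _⟩

theorem zpow_eq_zpow_of_modEq (hζ : IsPrimitiveRoot ζ N) [NeZero N] {a b : ℤ}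
    (h : a ≡ b [ZMOD N]) : ζ ^ a = ζ ^ b := by
  rw [← sub_add_cancel b a, zpow_add₀ (hζ.ne_zero (NeZero.ne N)),
    (hζ.zpow_eq_one_iff_dvd _).2 (Int.modEq_iff_dvd.1 h), one_mul]

end IsPrimitiveRoot

section DFT

variable {K : Type*} [Field K] {N : ℕ} {ζ : K}

def dftMatrix (N : ℕ) (ζ : K) : Matrix (Fin N) (Fin N) K :=
  Matrix.of fun j k => ζ ^ ((j : ℤ) * k)

def circulantEigenvalue (N : ℕ) (f : K → K) (ζ : K) (j : Fin N) : K :=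
  ∑ c : Fin N, f (ζ ^ (c : ℤ)) * ζ ^ (-((c : ℤ) * j))

variable [NeZero N]

theorem dftMatrix_mul_dftMatrix_inv (hζ : IsPrimitiveRoot ζ N) :
    dftMatrix N ζ * dftMatrix N ζ⁻¹ = (N : K) • 1 := by
  ext k l
  simp only [Matrix.mul_apply, dftMatrix, Matrix.of_apply, Matrix.smul_apply, Matrix.one_apply,
    smul_eq_mul, mul_ite, mul_one, mul_zero, inv_zpow', ← zpow_add₀ (hζ.ne_zero (NeZero.ne N))]
  rw [← hζ.sum_fin_zpow_mul_sub_eq_ite]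
  exact Fintype.sum_congr _ _ fun j => by ring_nf

theorem circulant_eq_dft (hζ : IsPrimitiveRoot ζ N) (f : K → K) :
    Matrix.of (fun k l : Fin N => f (ζ ^ ((l : ℤ) - k))) =
      (N : K)⁻¹ •
        (dftMatrix N ζ⁻¹ * Matrix.diagonal (circulantEigenvalue N f ζ) * dftMatrix N ζ) := by
  have hζ0 := hζ.ne_zero (NeZero.ne N)
  have hN : (N : K) ≠ 0 := hζ.neZero'.out
  ext k l
  obtain ⟨c₀, hc₀⟩ := Fin.exists_intCast_modEq (N := N) (l - k)
  have hsum :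
      ∑ j : Fin N, ζ⁻¹ ^ ((k : ℤ) * j) * circulantEigenvalue N f ζ j * ζ ^ ((j : ℤ) * l) =
      ∑ c : Fin N, f (ζ ^ (c : ℤ)) * ∑ j : Fin N, ζ ^ ((j : ℤ) * ((l - k) - c)) := by
    simp only [circulantEigenvalue, Finset.mul_sum, Finset.sum_mul]
    rw [Finset.sum_comm]
    refine Fintype.sum_congr _ _ fun c => Fintype.sum_congr _ _ fun j => ?_
    rw [inv_zpow', mul_comm (f _), mul_assoc, mul_assoc, mul_comm (f _), ← mul_assoc,
      ← mul_assoc, ← zpow_add₀ hζ0, ← zpow_add₀ hζ0]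
    ring_nf
  rw [Matrix.of_apply, Matrix.smul_apply, Matrix.mul_apply]
  simp only [Matrix.mul_diagonal, dftMatrix, Matrix.of_apply]
  simp only [smul_eq_mul, hsum, hζ.sum_fin_zpow_mul_sub, mul_ite, mul_zero]
  rw [Fin.sum_ite_intCast_modEq hc₀, hζ.zpow_eq_zpow_of_modEq hc₀, mul_comm,
    mul_inv_cancel_right₀ hN]

theorem inv_circulant_eq_dft (hζ : IsPrimitiveRoot ζ N) (f : K → K)
    (hμ : ∀ j, circulantEigenvalue N f ζ j ≠ 0) :
    (Matrix.of fun k l : Fin N => f (ζ ^ ((l : ℤ) - k)))⁻¹ =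
      (N : K)⁻¹ •
        (dftMatrix N ζ⁻¹ * Matrix.diagonal (circulantEigenvalue N f ζ)⁻¹ * dftMatrix N ζ) := by
  have hN : (N : K) ≠ 0 := hζ.neZero'.out
  have hFF' := dftMatrix_mul_dftMatrix_inv hζ
  have hF'F : dftMatrix N ζ⁻¹ * dftMatrix N ζ = (N : K) • 1 := by
    simpa using dftMatrix_mul_dftMatrix_inv hζ.inv
  have hDD' : Matrix.diagonal (circulantEigenvalue N f ζ) *
      Matrix.diagonal (circulantEigenvalue N f ζ)⁻¹ = 1 := by
    rw [Matrix.diagonal_mul_diagonal, ← Matrix.diagonal_one]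
    exact congrArg _ (funext fun j => mul_inv_cancel₀ (hμ j))
  refine Matrix.inv_eq_right_inv ?_
  rw [circulant_eq_dft hζ f]
  simp only [Matrix.smul_mul, Matrix.mul_smul, Matrix.mul_assoc]
  rw [← Matrix.mul_assoc (dftMatrix N ζ), hFF', Matrix.smul_mul, Matrix.one_mul,
    Matrix.mul_smul, ← Matrix.mul_assoc, hDD', Matrix.one_mul, Matrix.mul_smul, hF'F,
    smul_smul, smul_smul, smul_smul, show (N : K)⁻¹ * (N : K)⁻¹ * N * N = 1 by field_simp,
    one_smul]

theorem sum_sum_zpow_mul_dft_mul_zpow (hζ : IsPrimitiveRoot ζ N) (w : Fin N → K) (m n : ℕ) :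
    ∑ l : Fin N, ∑ k : Fin N, ζ ^ ((l : ℤ) * m) *
        ((N : K)⁻¹ • (dftMatrix N ζ⁻¹ * Matrix.diagonal w * dftMatrix N ζ)) l k *
          ζ ^ (-((k : ℤ) * n)) =
      if n ≡ m [MOD N] then N * w ⟨n % N, Nat.mod_lt n (NeZero.pos N)⟩ else 0 := by
  have hζ0 := hζ.ne_zero (NeZero.ne N)
  have hsep : ∑ l : Fin N, ∑ k : Fin N, ζ ^ ((l : ℤ) * m) *
        ((N : K)⁻¹ • (dftMatrix N ζ⁻¹ * Matrix.diagonal w * dftMatrix N ζ)) l k *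
          ζ ^ (-((k : ℤ) * n)) =
      (N : K)⁻¹ * ∑ j : Fin N, w j * (∑ k : Fin N, ζ ^ ((k : ℤ) * (j - n))) *
        ∑ l : Fin N, ζ ^ ((l : ℤ) * (m - j)) := by
    simp only [Matrix.smul_apply, Matrix.mul_apply, Matrix.diagonal_apply, mul_ite, mul_zero,
      Finset.sum_ite_eq', Finset.mem_univ, if_true, dftMatrix, Matrix.of_apply,
      smul_eq_mul, Finset.mul_sum, Finset.sum_mul]
    rw [Finset.sum_comm_cycle]
    refine Fintype.sum_congr _ _ fun j => Fintype.sum_congr _ _ fun l =>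
      Fintype.sum_congr _ _ fun k => ?_
    have hl : ζ ^ ((l : ℤ) * (m - j)) = ζ ^ ((l : ℤ) * m) * ζ⁻¹ ^ ((l : ℤ) * j) := by
      rw [inv_zpow', ← zpow_add₀ hζ0]; ring_nf
    have hk : ζ ^ ((k : ℤ) * (j - n)) = ζ ^ ((j : ℤ) * k) * ζ ^ (-((k : ℤ) * n)) := by
      rw [← zpow_add₀ hζ0]; ring_nf
    rw [hl, hk]
    ring
  rw [hsep]
  simp only [hζ.sum_fin_zpow_mul_sub]
  split_ifs with hnm
  · have hnm' : (n : ℤ) ≡ m [ZMOD N] := Int.natCast_modEq_iff.2 hnm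
    have hterm (j : Fin N) : w j * (if (n : ℤ) ≡ j [ZMOD N] then (N : K) else 0) *
        (if (j : ℤ) ≡ m [ZMOD N] then (N : K) else 0) =
          if (j : ℤ) ≡ n [ZMOD N] then N * N * w j else 0 := by
      by_cases h : (j : ℤ) ≡ n [ZMOD N]
      · rw [if_pos h.symm, if_pos (h.trans hnm'), if_pos h]; ring
      · rw [if_neg (mt Int.ModEq.symm h), if_neg h]; ring
    rw [Fintype.sum_congr _ _ hterm,
      Fin.sum_ite_intCast_modEq (c₀ := ⟨n % N, Nat.mod_lt n (NeZero.pos N)⟩)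
        (Int.natCast_modEq_iff.2 (Nat.mod_modEq n N))]
    field_simp
  · refine (congrArg _ (Finset.sum_eq_zero fun j _ => ?_)).trans (mul_zero _)
    by_cases h : (n : ℤ) ≡ j [ZMOD N]
    · rw [if_neg fun h' => hnm (Int.natCast_modEq_iff.1 (h.trans h')), mul_zero]
    · rw [if_neg h, mul_zero, zero_mul]

end DFT

theorem tsum_ite_modEq_eq_tsum_add_mul {M : Type*} [AddCommMonoid M] [TopologicalSpace M] {N : ℕ}
    [NeZero N] {j : ℕ} (hj : j < N) (g : ℕ → M) :
    ∑' m : ℕ, (if j ≡ m [MOD N] then g m else 0) = ∑' q : ℕ, g (j + q * N) := by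
  have hinj : Function.Injective fun q : ℕ => j + q * N := fun a b h =>
    Nat.eq_of_mul_eq_mul_right (NeZero.pos N) (Nat.add_left_cancel h)
  rw [← hinj.tsum_eq]
  · exact tsum_congr fun q => if_pos (Nat.add_mul_mod_self_right j q N).symm
  · intro m hm
    have h : j % N = m % N := by_contra fun h => hm (if_neg h)
    have := Nat.mod_add_div m N
    rw [Nat.mod_eq_of_lt hj] at h
    exact ⟨m / N, by simp only; rw [mul_comm]; omega⟩

theorem IsPrimitiveRoot.sum_fin_tsum_mul_zpow {N : ℕ} [NeZero N] {ζ : ℂ}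
    (hζ : IsPrimitiveRoot ζ N) {a : ℕ → ℂ} (ha : Summable fun m => ‖a m‖) {j : ℕ}
    (hj : j < N) :
    ∑ c : Fin N, (∑' m, a m * (ζ ^ (c : ℤ)) ^ m) * ζ ^ (-((c : ℤ) * j)) =
      N * ∑' q, a (j + q * N) := by
  have hζ0 := hζ.ne_zero (NeZero.ne N)
  have hterm (c : Fin N) (m : ℕ) :
      a m * (ζ ^ (c : ℤ)) ^ m * ζ ^ (-((c : ℤ) * j)) = a m * ζ ^ ((c : ℤ) * (m - j)) := by
    rw [← zpow_natCast, ← zpow_mul, mul_assoc, ← zpow_add₀ hζ0]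
    ring_nf
  have hsummable (c : Fin N) : Summable fun m => a m * ζ ^ ((c : ℤ) * (m - j)) :=
    Summable.of_norm_bounded ha fun m => by
      rw [norm_mul, norm_zpow, hζ.norm'_eq_one (NeZero.ne N), one_zpow, mul_one]
  simp only [← tsum_mul_right, hterm]
  rw [← Summable.tsum_finsetSum fun c _ => hsummable c]
  simp only [← Finset.mul_sum, hζ.sum_fin_zpow_mul_sub, Int.natCast_modEq_iff, mul_ite, mul_zero]
  rw [tsum_ite_modEq_eq_tsum_add_mul hj, tsum_mul_right, mul_comm]

theorem Complex.exp_mul_eq_tsum (x z : ℂ) :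
    Complex.exp (x * z) = ∑' m, x ^ m / m.factorial * z ^ m := by
  rw [Complex.exp_eq_exp_ℂ, NormedSpace.exp_eq_tsum_div]
  exact tsum_congr fun m => by ring

/- `coherentCoeff p n = ⟨n|√p⟩` is the Fock coefficient `c_n` of a coherent state of mean photon
number `p`; `coherentWeight`, `coherentWeightSum` and `tailRatio` are `λ_n`, `λ̂_j` and `ν_j`. -/
noncomputable def coherentCoeff (p : ℝ) (n : ℕ) : ℝ :=
  Real.exp (-p / 2) * Real.sqrt p ^ n / Real.sqrt (Nat.factorial n)

noncomputable def coherentWeight (N : ℕ) (p : ℝ) (n : ℕ) : ℝ :=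
  (N : ℝ) * Real.exp (-p) * p ^ n / Nat.factorial n

noncomputable def coherentWeightSum (N : ℕ) (p : ℝ) (j : ℕ) : ℝ :=
  ∑' q : ℕ, coherentWeight N p (j + q * N)

noncomputable def tailRatio (N : ℕ) (p : ℝ) (j : ℕ) : ℝ :=
  ∑' u : ℕ, (Nat.factorial j : ℝ) * p ^ ((u + 1) * N) / Nat.factorial (j + (u + 1) * N)

section CoherentWeight

variable {N : ℕ} {p : ℝ}

theorem coherentWeight_eq_mul_coherentCoeff_sq (hp : 0 ≤ p) (n : ℕ) :
    coherentWeight N p n = N * coherentCoeff p n ^ 2 := by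
  have hexp : Real.exp (-p / 2) ^ 2 = Real.exp (-p) := by
    rw [← Real.exp_nat_mul]; ring_nf
  rw [coherentWeight, coherentCoeff, div_pow, mul_pow, hexp, ← pow_mul, mul_comm n, pow_mul,
    Real.sq_sqrt hp, Real.sq_sqrt (Nat.cast_nonneg _)]
  ring

theorem sqrt_coherentWeight_mul (hp : 0 ≤ p) (m n : ℕ) :
    Real.sqrt (coherentWeight N p m * coherentWeight N p n) =
      N * coherentCoeff p m * coherentCoeff p n := by
  have hc (n : ℕ) : 0 ≤ coherentCoeff p n := by unfold coherentCoeff; positivity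
  rw [coherentWeight_eq_mul_coherentCoeff_sq hp, coherentWeight_eq_mul_coherentCoeff_sq hp,
    show (N : ℝ) * coherentCoeff p m ^ 2 * (N * coherentCoeff p n ^ 2) =
      (N * coherentCoeff p m * coherentCoeff p n) ^ 2 by ring,
    Real.sqrt_sq (by have := hc m; have := hc n; positivity)]

theorem summable_coherentWeight_add_mul (hN : 0 < N) (p : ℝ) (j : ℕ) :
    Summable fun q => coherentWeight N p (j + q * N) := by
  have hinj : Function.Injective fun q : ℕ => j + q * N := fun a b h =>
    Nat.eq_of_mul_eq_mul_right hN (Nat.add_left_cancel h)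
  refine (((Real.summable_pow_div_factorial p).mul_left ((N : ℝ) * Real.exp (-p))).comp_injective
    hinj).congr fun q => ?_
  simp only [Function.comp, coherentWeight, mul_div_assoc]

theorem coherentWeightSum_pos (hN : 0 < N) (hp : 0 < p) (j : ℕ) : 0 < coherentWeightSum N p j :=
  (summable_coherentWeight_add_mul hN p j).tsum_pos (fun q => by unfold coherentWeight; positivity)
    0 (by unfold coherentWeight; positivity)

theorem coherentWeightSum_eq_mul_one_add_tailRatio (hN : 0 < N) (j : ℕ) :
    coherentWeightSum N p j = coherentWeight N p j * (1 + tailRatio N p j) := by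
  rw [coherentWeightSum, (summable_coherentWeight_add_mul hN p j).tsum_eq_zero_add, tailRatio,
    mul_add, mul_one, zero_mul, add_zero, ← tsum_mul_left]
  congr 1
  refine tsum_congr fun u => ?_
  rw [coherentWeight, coherentWeight, pow_add]
  field_simp

theorem sqrt_coherentWeight_mul_div_coherentWeightSum (hN : 0 < N) (hp : 0 < p) (j s t : ℕ) :
    Real.sqrt (coherentWeight N p (j + s * N) * coherentWeight N p (j + t * N)) /
        coherentWeightSum N p j =
      Nat.factorial j * Real.sqrt p ^ ((s + t) * N) /
        (Real.sqrt (Nat.factorial (j + s * N)) * Real.sqrt (Nat.factorial (j + t * N)) *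
          (1 + tailRatio N p j)) := by
  have hν : 0 ≤ tailRatio N p j := tsum_nonneg fun u => by positivity
  have hpow : Real.sqrt p ^ (j + s * N) * Real.sqrt p ^ (j + t * N) =
      p ^ j * Real.sqrt p ^ ((s + t) * N) := by
    rw [← pow_add, show j + s * N + (j + t * N) = 2 * j + (s + t) * N by ring, pow_add, pow_mul,
      Real.sq_sqrt hp.le]
  have hexp : Real.exp (-p / 2) * Real.exp (-p / 2) = Real.exp (-p) := by
    rw [← Real.exp_add]; ring_nf
  rw [sqrt_coherentWeight_mul hp.le, coherentWeightSum_eq_mul_one_add_tailRatio hN, coherentCoeff,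
    coherentCoeff, coherentWeight, ← hexp]
  field_simp
  exact hpow

end CoherentWeight

theorem circulantEigenvalue_exp_eq_coherentWeightSum {N : ℕ} [NeZero N] {ζ : ℂ}
    (hζ : IsPrimitiveRoot ζ N) (p : ℝ) (j : Fin N) :
    circulantEigenvalue N (fun z => (Real.exp (-p) : ℂ) * Complex.exp (p * z)) ζ j =
      coherentWeightSum N p j := by
  set a : ℕ → ℂ := fun m => ((Real.exp (-p) * (p ^ m / Nat.factorial m) : ℝ) : ℂ)
  have ha : Summable fun m => ‖a m‖ :=
    ((Real.summable_pow_div_factorial p).mul_left (Real.exp (-p))).abs.congr fun m => by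
      simp only [a, Complex.norm_real, Real.norm_eq_abs]
  have hexp (z : ℂ) : (Real.exp (-p) : ℂ) * Complex.exp (p * z) = ∑' m, a m * z ^ m := by
    rw [Complex.exp_mul_eq_tsum, ← tsum_mul_left]
    exact tsum_congr fun m => by simp only [a]; push_cast; ring
  simp only [circulantEigenvalue, hexp]
  rw [hζ.sum_fin_tsum_mul_zpow ha j.2, coherentWeightSum, Complex.ofReal_tsum, ← tsum_mul_left]
  exact tsum_congr fun q => by simp only [a, coherentWeight]; push_cast; ring

theorem coherentProjector_entry_of_isPrimitiveRoot {N : ℕ} [NeZero N] {ζ : ℂ}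
    (hζ : IsPrimitiveRoot ζ N) {p : ℝ} (hp : 0 < p) (m n : ℕ) :
    ∑ l : Fin N, ∑ k : Fin N, ((coherentCoeff p m : ℂ) * ζ ^ ((l : ℤ) * m)) *
        (Matrix.of fun k l : Fin N =>
          (Real.exp (-p) : ℂ) * Complex.exp (p * ζ ^ ((l : ℤ) - k)))⁻¹ l k *
        ((coherentCoeff p n : ℂ) * ζ ^ (-((k : ℤ) * n))) =
      if n ≡ m [MOD N] then
        ((Real.sqrt (coherentWeight N p m * coherentWeight N p n) /
          coherentWeightSum N p (n % N) : ℝ) : ℂ)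
      else 0 := by
  have hμ := circulantEigenvalue_exp_eq_coherentWeightSum hζ p
  have hμ0 (j : Fin N) : ((coherentWeightSum N p j : ℝ) : ℂ) ≠ 0 :=
    Complex.ofReal_ne_zero.2 (coherentWeightSum_pos (NeZero.pos N) hp j).ne'
  have hterm (l k : Fin N) (x : ℂ) :
      (coherentCoeff p m : ℂ) * ζ ^ ((l : ℤ) * m) * x *
          ((coherentCoeff p n : ℂ) * ζ ^ (-((k : ℤ) * n))) =
        (coherentCoeff p m * coherentCoeff p n : ℂ) *
          (ζ ^ ((l : ℤ) * m) * x * ζ ^ (-((k : ℤ) * n))) := by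
    ring
  have hinv := inv_circulant_eq_dft hζ _ fun j => hμ j ▸ hμ0 j
  rw [hinv]
  simp only [hterm, ← Finset.mul_sum]
  rw [sum_sum_zpow_mul_dft_mul_zpow hζ, mul_ite, mul_zero, sqrt_coherentWeight_mul hp.le,
    Pi.inv_apply, hμ]
  push_cast
  field_simp

theorem Complex.exp_two_pi_I_mul_div (N : ℕ) (d : ℤ) :
    Complex.exp (2 * Real.pi * Complex.I * d / N) =
      Complex.exp (2 * Real.pi * Complex.I / N) ^ d := by
  rw [← Complex.exp_int_mul]
  ring_nf

theorem coherentProjector_entry {N : ℕ} (hN : 0 < N) {p : ℝ} (hp : 0 < p)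
    {T : Fin N → ℕ → ℂ}
    (hT : ∀ (k : Fin N) (n : ℕ), T k n = (coherentCoeff p n : ℂ) *
      Complex.exp (-(2 * Real.pi * Complex.I) * (k : ℂ) * (n : ℂ) / (N : ℂ)))
    {B : Matrix (Fin N) (Fin N) ℂ}
    (hB : ∀ k l : Fin N, B k l = (Real.exp (-p) : ℂ) *
      Complex.exp ((p : ℂ) * Complex.exp (2 * Real.pi * Complex.I * ((l : ℂ) - (k : ℂ)) / (N : ℂ))))
    (m n : ℕ) :
    ∑ l : Fin N, ∑ k : Fin N, (starRingEnd ℂ) (T l m) * B⁻¹ l k * T k n =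
      if n ≡ m [MOD N] then
        ((Real.sqrt (coherentWeight N p m * coherentWeight N p n) /
          coherentWeightSum N p (n % N) : ℝ) : ℂ)
      else 0 := by
  have := NeZero.of_pos hN
  set ζ := Complex.exp (2 * Real.pi * Complex.I / N)
  have hζ : IsPrimitiveRoot ζ N := Complex.isPrimitiveRoot_exp N hN.ne'
  have hζpow (d : ℤ) : Complex.exp (2 * Real.pi * Complex.I * d / N) = ζ ^ d :=
    Complex.exp_two_pi_I_mul_div N d
  have hBζ : B = Matrix.of fun k l : Fin N =>
      (Real.exp (-p) : ℂ) * Complex.exp (p * ζ ^ ((l : ℤ) - k)) := by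
    ext k l
    rw [hB, Matrix.of_apply, ← hζpow]
    push_cast
    rfl
  have hTζ (k : Fin N) (n : ℕ) : T k n = coherentCoeff p n * ζ ^ (-((k : ℤ) * n)) := by
    rw [hT, ← hζpow]
    push_cast
    ring_nf
  have hTζ' (l : Fin N) (m : ℕ) :
      (starRingEnd ℂ) (T l m) = coherentCoeff p m * ζ ^ ((l : ℤ) * m) := by
    rw [hTζ, map_mul, Complex.conj_ofReal, map_zpow₀,
      ← Complex.inv_eq_conj (hζ.norm'_eq_one hN.ne'), inv_zpow', neg_neg]
  simp only [hTζ']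
  simp only [hTζ, hBζ]
  exact coherentProjector_entry_of_isPrimitiveRoot hζ hp m n

theorem stmt10 (N : ℕ) (hN : 0 < N) (p : ℝ) (hp : 0 < p)
    (T : Fin N → ℕ → ℂ)
    (hT : ∀ (k : Fin N) (n : ℕ),
      T k n = ((Real.exp (-p / 2) * Real.sqrt p ^ n / Real.sqrt (Nat.factorial n) : ℝ) : ℂ) *
        Complex.exp (-(2 * Real.pi * Complex.I) * (k : ℂ) * (n : ℂ) / (N : ℂ)))
    (B : Matrix (Fin N) (Fin N) ℂ)
    (hB : ∀ k l : Fin N, B k l = (Real.exp (-p) : ℂ) *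
      Complex.exp ((p : ℂ) * Complex.exp (2 * Real.pi * Complex.I * ((l : ℂ) - (k : ℂ)) / (N : ℂ))))
    (lam : ℕ → ℝ)
    (hlam : ∀ n : ℕ, lam n = (N : ℝ) * Real.exp (-p) * p ^ n / Nat.factorial n)
    (lamhat : ℕ → ℝ)
    (hlamhat : ∀ j : ℕ, lamhat j = ∑' q : ℕ, lam (j + q * N))
    (ν : ℕ → ℝ)
    (hν : ∀ j : ℕ, ν j = ∑' u : ℕ,
      (Nat.factorial j : ℝ) * p ^ ((u + 1) * N) / Nat.factorial (j + (u + 1) * N)) :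
    (∀ m n : ℕ,
      (∑ l : Fin N, ∑ k : Fin N, (starRingEnd ℂ) (T l m) * (B⁻¹ l k) * T k n) =
        if n % N = m % N then ((Real.sqrt (lam m * lam n) / lamhat (n % N) : ℝ) : ℂ) else 0) ∧
    (∀ j s t : ℕ, j ≤ N - 1 →
      (∑ l : Fin N, ∑ k : Fin N,
          (starRingEnd ℂ) (T l (j + s * N)) * (B⁻¹ l k) * T k (j + t * N)) =
        (((Nat.factorial j : ℝ) * Real.sqrt p ^ ((s + t) * N) /
          (Real.sqrt (Nat.factorial (j + s * N)) * Real.sqrt (Nat.factorial (j + t * N)) *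
            (1 + ν j)) : ℝ) : ℂ)) := by
  obtain rfl : lam = coherentWeight N p := funext hlam
  obtain rfl : lamhat = coherentWeightSum N p := funext hlamhat
  obtain rfl : ν = tailRatio N p := funext hν
  have hP := coherentProjector_entry hN hp hT hB
  refine ⟨hP, fun j s t hj => ?_⟩
  have hmod : j + t * N ≡ j + s * N [MOD N] := by
    simp only [Nat.ModEq, Nat.add_mul_mod_self_right]
  rw [hP, if_pos hmod, Nat.add_mul_mod_self_right, Nat.mod_eq_of_lt (by omega),
    sqrt_coherentWeight_mul_div_coherentWeightSum hN hp]
end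

section
/- For any ψ ∈ ℓ² with ‖ψ‖ = 1, writing ψ = ψ_{N-1} + ψ_{N-1}^⊥ (projections onto the first N Fock states and their complement, with ‖ψ_{N-1}^⊥‖ = ε), the error ‖ψ - P_S ψ‖² satisfies ‖ψ - P_S ψ‖² ≤ ν_0(p,N)/(1+ν_0(p,N)) + 2ε√(1-ε²) + ε²(2+ν_0(p,N))/(1+ν_0(p,N)), where P_S is the orthogonal projector onto the span of coherent states |z_k⟩ at z_k = √p e^{2πik/N}, and ν_0(p,N) = ∑_{u≥1} p^{uN}/(uN)!. -/
/-!
The combinations `dft cs j = N⁻¹ ∑ₖ ω^{-jk} cs k` of the coherent states are unnormalised cat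
states: their Fock coefficients are those of `|√p⟩` restricted to the residue class of `j` mod `N`.
Replacing each Fock state `|j⟩`, `j < N`, by its projection onto the line of the `j`-th cat state
gives a vector `w` in the span. The residuals are supported on distinct residue classes, hence
orthogonal, and the `j`-th has squared norm `1 - 1/(1 + ν_j) ≤ ν₀/(1 + ν₀)`, where
`ν_j = ∑_{u≥1} p^{uN} j!/(uN+j)! ≤ ν₀` because `j! (uN)! ≤ (uN+j)!`. So the truncation `ψN` of `ψ`
lies within `√(ν₀/(1 + ν₀)) ‖ψN‖` of `w`, and `‖ψ - P ψ‖ ≤ ‖ψ - w‖ ≤ ε + ‖ψN - w‖`.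
-/

open scoped InnerProductSpace Nat
open Complex Real

theorem one_sub_div_le_div_one_add {a S ν : ℝ} (ha : 0 < a) (hS : S ≤ a * (1 + ν)) (hS0 : 0 < S) :
    1 - a / S ≤ ν / (1 + ν) := by
  have hν : 0 < 1 + ν := pos_of_mul_pos_right (hS0.trans_le hS) ha.le
  rw [sub_le_iff_le_add, ← sub_le_iff_le_add', one_sub_div hν.ne', add_sub_cancel_right,
    div_le_div_iff₀ hν hS0]
  linarith

section

variable {ι 𝕜 E : Type*} [RCLike 𝕜] [NormedAddCommGroup E] [InnerProductSpace 𝕜 E]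

theorem norm_sum_sq_eq_sum_norm_sq_of_pairwise {s : Finset ι} {y : ι → E}
    (h : Pairwise fun i j => ⟪y i, y j⟫_𝕜 = 0) :
    ‖∑ i ∈ s, y i‖ ^ 2 = ∑ i ∈ s, ‖y i‖ ^ 2 := by
  have hdiag : ⟪∑ i ∈ s, y i, ∑ i ∈ s, y i⟫_𝕜 = ∑ i ∈ s, ⟪y i, y i⟫_𝕜 := by
    simp only [sum_inner, inner_sum]
    exact Finset.sum_congr rfl fun i hi =>
      Finset.sum_eq_single i (fun j _ hji => h hji) fun hi' => absurd hi hi'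
  simpa only [map_sum, inner_self_eq_norm_sq] using congrArg RCLike.re hdiag

theorem norm_sub_le_norm_sub_of_mem_orthogonal {K : Submodule 𝕜 E} {x y z : E} (hy : y ∈ K)
    (hxy : x - y ∈ Kᗮ) (hz : z ∈ K) : ‖x - y‖ ≤ ‖x - z‖ := by
  have horth : ⟪x - y, y - z⟫_𝕜 = 0 :=
    inner_eq_zero_symm.1 ((K.mem_orthogonal _).1 hxy _ (K.sub_mem hy hz))
  have hpyth := norm_add_sq_eq_norm_sq_add_norm_sq_of_inner_eq_zero _ _ horth
  rw [sub_add_sub_cancel] at hpyth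
  exact le_of_sq_le_sq (by nlinarith [sq_nonneg ‖y - z‖]) (norm_nonneg _)

theorem norm_sub_smul_sq_of_inner_eq {x v : E} {a : ℝ} (hxv : ⟪x, v⟫_𝕜 = a) (hv : v ≠ 0) :
    ‖x - ((a / ‖v‖ ^ 2 : ℝ) : 𝕜) • v‖ ^ 2 = ‖x‖ ^ 2 - a ^ 2 / ‖v‖ ^ 2 := by
  have hv' : ‖v‖ ≠ 0 := norm_ne_zero_iff.2 hv
  rw [@norm_sub_sq 𝕜, inner_smul_right, hxv, norm_smul, RCLike.norm_ofReal, ← RCLike.ofReal_mul,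
    RCLike.ofReal_re, abs_div, abs_of_nonneg (sq_nonneg ‖v‖)]
  field_simp
  rw [sq_abs]
  ring

theorem Orthonormal.norm_sum_inner_smul_sq_add {v : ι → E} (hv : Orthonormal 𝕜 v) (s : Finset ι)
    (x : E) :
    ‖∑ i ∈ s, ⟪v i, x⟫_𝕜 • v i‖ ^ 2 + ‖x - ∑ i ∈ s, ⟪v i, x⟫_𝕜 • v i‖ ^ 2 = ‖x‖ ^ 2 := by
  have horth : ⟪∑ i ∈ s, ⟪v i, x⟫_𝕜 • v i, x - ∑ i ∈ s, ⟪v i, x⟫_𝕜 • v i⟫_𝕜 = 0 := by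
    refine (sum_inner _ _ _).trans (Finset.sum_eq_zero fun i hi => ?_)
    rw [inner_smul_left, inner_sub_right, hv.inner_right_sum _ hi, sub_self, mul_zero]
  rw [sq, sq, ← norm_add_sq_eq_norm_sq_add_norm_sq_of_inner_eq_zero _ _ horth, add_sub_cancel,
    sq]

namespace HilbertBasis

variable (b : HilbertBasis ι 𝕜 E)

theorem inner_tsum_smul {f : ι → 𝕜} (hf : Summable fun i => ‖f i‖ ^ 2) (i : ι) :
    ⟪b i, ∑' j, f j • b j⟫_𝕜 = f i := by
  let F : lp (fun _ : ι => 𝕜) 2 := ⟨f, memℓp_gen (by simpa using hf)⟩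
  rw [(b.hasSum_repr_symm F).tsum_eq, ← b.repr_apply_apply]
  simp [F]

theorem inner_eq_zero_of_disjoint_support {x y : E}
    (h : ∀ i, ⟪b i, x⟫_𝕜 = 0 ∨ ⟪b i, y⟫_𝕜 = 0) : ⟪x, y⟫_𝕜 = 0 := by
  rw [← b.tsum_inner_mul_inner]
  refine (tsum_congr fun i => ?_).trans tsum_zero
  rcases h i with hx | hy
  · rw [inner_eq_zero_symm.1 hx, zero_mul]
  · rw [hy, mul_zero]

theorem hasSum_norm_sq_inner (x : E) :
    HasSum (fun i => ‖⟪b i, x⟫_𝕜‖ ^ 2) (‖x‖ ^ 2) := by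
  refine (RCLike.hasSum_ofReal 𝕜).1 ?_
  convert b.hasSum_inner_mul_inner x x using 1
  · ext i
    rw [← inner_conj_symm x, RCLike.conj_mul, RCLike.ofReal_pow]
  · rw [inner_self_eq_norm_sq_to_K, RCLike.ofReal_pow]

end HilbertBasis

section ResidueClass

variable (b : HilbertBasis ℕ 𝕜 E) {N : ℕ} {v : Fin N → E} {a : ℕ → ℝ}

theorem norm_sq_eq_tsum_of_inner_eq_ite
    (hv : ∀ j : Fin N, ∀ n, ⟪b n, v j⟫_𝕜 = if n % N = j then (a n : 𝕜) else 0) (j : Fin N) :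
    ‖v j‖ ^ 2 = ∑' u : ℕ, a (u * N + j) ^ 2 := by
  have hmod : ∀ u : ℕ, (u * N + j) % N = j := fun u => by
    rw [Nat.mul_add_mod_self_right, Nat.mod_eq_of_lt j.isLt]
  have hinj : Function.Injective fun u : ℕ => u * N + j :=
    (add_left_injective _).comp (mul_left_injective₀ j.pos.ne')
  rw [← (b.hasSum_norm_sq_inner (v j)).tsum_eq, ← hinj.tsum_eq]
  · simp [hv, hmod]
  · intro n hn
    have hn' : n % N = j := by
      by_contra h
      simp [hv, h] at hn
    exact ⟨n / N, by rw [← hn']; exact Nat.div_add_mod' n N⟩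

theorem pairwise_inner_sub_smul_eq_zero
    (hv : ∀ j : Fin N, ∀ n, ⟪b n, v j⟫_𝕜 = if n % N = j then (a n : 𝕜) else 0) (t : Fin N → 𝕜) :
    Pairwise fun i j : Fin N => ⟪b i - t i • v i, b j - t j • v j⟫_𝕜 = 0 := by
  have hsupp : ∀ (j : Fin N) n, n % N ≠ j → ⟪b n, b j - t j • v j⟫_𝕜 = 0 := by
    intro j n hn
    have hnj : n ≠ j := by rintro rfl; exact hn (Nat.mod_eq_of_lt j.isLt)
    rw [inner_sub_right, inner_smul_right, hv, if_neg hn, orthonormal_iff_ite.1 b.orthonormal,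
      if_neg hnj, mul_zero, sub_zero]
  intro i j hij
  refine b.inner_eq_zero_of_disjoint_support fun n => ?_
  by_cases hi : n % N = i
  · exact Or.inr (hsupp j n fun h => hij (Fin.ext (hi.symm.trans h)))
  · exact Or.inl (hsupp i n hi)

theorem exists_mem_span_norm_sub_sq_le
    (hv : ∀ j : Fin N, ∀ n, ⟪b n, v j⟫_𝕜 = if n % N = j then (a n : 𝕜) else 0)
    (ha : ∀ j : Fin N, a j ≠ 0) {ν : ℝ} (hvle : ∀ j : Fin N, ‖v j‖ ^ 2 ≤ a j ^ 2 * (1 + ν))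
    (c : Fin N → 𝕜) :
    ∃ w ∈ Submodule.span 𝕜 (Set.range v),
      ‖∑ j, c j • b j - w‖ ^ 2 ≤ ν / (1 + ν) * ‖∑ j, c j • b j‖ ^ 2 := by
  set t : Fin N → 𝕜 := fun j => ((a j / ‖v j‖ ^ 2 : ℝ) : 𝕜)
  have hvj : ∀ j : Fin N, ⟪b j, v j⟫_𝕜 = a j := fun j => by
    rw [hv, if_pos (Nat.mod_eq_of_lt j.isLt)]
  have hv0 : ∀ j, v j ≠ 0 := fun j h => ha j (by simpa [h] using (hvj j).symm)
  have hres : ∀ j : Fin N, ‖b j - t j • v j‖ ^ 2 ≤ ν / (1 + ν) := by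
    intro j
    rw [norm_sub_smul_sq_of_inner_eq (hvj j) (hv0 j), b.orthonormal.1 j, one_pow]
    exact one_sub_div_le_div_one_add (sq_pos_of_ne_zero (ha j)) (hvle j)
      (sq_pos_of_pos (norm_pos_iff.2 (hv0 j)))
  have horth : Pairwise fun i j => ⟪c i • (b i - t i • v i), c j • (b j - t j • v j)⟫_𝕜 = 0 :=
    fun i j hij => by
      simp only
      rw [inner_smul_left, inner_smul_right, pairwise_inner_sub_smul_eq_zero b hv t hij,
        mul_zero, mul_zero]
  have hb : Pairwise fun i j : Fin N => ⟪c i • b i, c j • b j⟫_𝕜 = 0 := fun i j hij => by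
    simp only
    rw [inner_smul_left, inner_smul_right, b.orthonormal.2 (by simpa [Fin.ext_iff] using hij),
      mul_zero, mul_zero]
  refine ⟨∑ j, (c j * t j) • v j, Submodule.sum_mem _ fun j _ =>
    Submodule.smul_mem _ _ (Submodule.subset_span ⟨j, rfl⟩), ?_⟩
  have hdiff : ∑ j, c j • b j - ∑ j, (c j * t j) • v j = ∑ j, c j • (b j - t j • v j) := by
    simp only [smul_sub, mul_smul, Finset.sum_sub_distrib]
  rw [hdiff, norm_sum_sq_eq_sum_norm_sq_of_pairwise horth,
    norm_sum_sq_eq_sum_norm_sq_of_pairwise hb, Finset.mul_sum]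
  refine Finset.sum_le_sum fun j _ => ?_
  rw [norm_smul, norm_smul, b.orthonormal.1 j, mul_one, mul_pow, mul_comm]
  gcongr
  exact hres j

end ResidueClass

end

theorem IsPrimitiveRoot.sum_range_zpow_pow {K : Type*} [Field K] {ζ : K} {N : ℕ}
    (hζ : IsPrimitiveRoot ζ N) (m : ℤ) :
    ∑ k ∈ Finset.range N, (ζ ^ m) ^ k = if (N : ℤ) ∣ m then (N : K) else 0 := by
  split_ifs with hm
  · simp [(hζ.zpow_eq_one_iff_dvd m).2 hm]
  · have hne : ζ ^ m ≠ 1 := fun h => hm ((hζ.zpow_eq_one_iff_dvd m).1 h)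
    rw [geom_sum_eq hne, ← zpow_natCast, ← zpow_mul, mul_comm, zpow_mul, zpow_natCast,
      hζ.pow_eq_one, one_zpow, sub_self, zero_div]

theorem sum_exp_two_pi_I_mul_div {N : ℕ} (hN : N ≠ 0) (m : ℤ) :
    ∑ k : Fin N, exp (2 * π * I * m * k / N) = if (N : ℤ) ∣ m then (N : ℂ) else 0 := by
  rw [← (isPrimitiveRoot_exp N hN).sum_range_zpow_pow m, ← Fin.sum_univ_eq_sum_range]
  refine Finset.sum_congr rfl fun k _ => ?_
  rw [← Complex.exp_int_mul, ← Complex.exp_nat_mul]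
  ring_nf

noncomputable def dft {H : Type*} [AddCommGroup H] [Module ℂ H] {N : ℕ} (x : Fin N → H)
    (j : Fin N) : H :=
  (N : ℂ)⁻¹ • ∑ k : Fin N, exp (-(2 * π * I * j * k / N)) • x k

section Dft

variable {H : Type*} [NormedAddCommGroup H] [InnerProductSpace ℂ H]

theorem dft_mem_span {N : ℕ} (x : Fin N → H) (j : Fin N) :
    dft x j ∈ Submodule.span ℂ (Set.range x) :=
  Submodule.smul_mem _ _ <| Submodule.sum_mem _ fun k _ =>
    Submodule.smul_mem _ _ (Submodule.subset_span ⟨k, rfl⟩)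

theorem inner_dft {N : ℕ} {x : Fin N → H} {y : H} {α : ℂ} {n : ℕ}
    (h : ∀ k : Fin N, ⟪y, x k⟫_ℂ = α * exp (2 * π * I * k * n / N)) (j : Fin N) :
    ⟪y, dft x j⟫_ℂ = if n % N = j then α else 0 := by
  have hN : (N : ℂ) ≠ 0 := Nat.cast_ne_zero.2 (Fin.pos j).ne'
  have hterm : ∀ k : Fin N, exp (-(2 * π * I * j * k / N)) * ⟪y, x k⟫_ℂ
      = α * exp (2 * π * I * ((n : ℤ) - (j : ℕ) : ℤ) * k / N) := by
    intro k
    rw [h, mul_left_comm, ← Complex.exp_add]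
    push_cast
    ring_nf
  have hdvd : (N : ℤ) ∣ (n : ℤ) - (j : ℕ) ↔ n % N = j := by
    rw [← Nat.modEq_iff_dvd, Nat.ModEq, Nat.mod_eq_of_lt j.isLt, eq_comm]
  simp only [dft, inner_smul_right, inner_sum, hterm, ← Finset.mul_sum,
    sum_exp_two_pi_I_mul_div (Fin.pos j).ne', hdvd]
  split_ifs
  · field_simp
  · simp

end Dft

theorem pow_div_factorial_add_le {p : ℝ} (hp : 0 ≤ p) (m n : ℕ) :
    p ^ (m + n) / (m + n)! ≤ p ^ m / m ! * (p ^ n / n !) := by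
  have hfact : (m ! * n ! : ℝ) ≤ (m + n)! := by
    exact_mod_cast Nat.le_of_dvd (Nat.factorial_pos _)
      (Nat.factorial_mul_factorial_dvd_factorial_add m n)
  rw [_root_.div_mul_div_comm, ← pow_add]
  exact div_le_div_of_nonneg_left (by positivity) (by positivity) hfact

theorem summable_pow_div_factorial_mul_add (p : ℝ) {N : ℕ} (hN : 0 < N) (j : ℕ) :
    Summable fun u : ℕ => p ^ (u * N + j) / (u * N + j)! :=
  (Real.summable_pow_div_factorial p).comp_injective
    ((add_left_injective j).comp (mul_left_injective₀ hN.ne'))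

theorem tsum_pow_div_factorial_mul_add_le {p : ℝ} (hp : 0 ≤ p) {N : ℕ} (hN : 0 < N) (j : ℕ) :
    ∑' u : ℕ, p ^ (u * N + j) / (u * N + j)!
      ≤ p ^ j / j ! * (1 + ∑' u : ℕ, p ^ ((u + 1) * N) / ((u + 1) * N)!) := by
  have hsum := summable_pow_div_factorial_mul_add p hN 0
  simp only [add_zero] at hsum
  calc ∑' u : ℕ, p ^ (u * N + j) / (u * N + j)!
      ≤ ∑' u : ℕ, p ^ j / j ! * (p ^ (u * N) / (u * N)!) :=
        (summable_pow_div_factorial_mul_add p hN j).tsum_le_tsum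
          (fun u => by rw [add_comm (u * N)]; exact pow_div_factorial_add_le hp j (u * N))
          (hsum.mul_left _)
    _ = p ^ j / j ! * (1 + ∑' u : ℕ, p ^ ((u + 1) * N) / ((u + 1) * N)!) := by
        rw [hsum.tsum_mul_left, hsum.tsum_eq_zero_add]
        simp

noncomputable def coherentAmplitude (p : ℝ) (n : ℕ) : ℝ :=
  Real.exp (-p / 2) * Real.sqrt p ^ n / Real.sqrt (n ! : ℝ)

theorem coherentAmplitude_pos {p : ℝ} (hp : 0 < p) (n : ℕ) : 0 < coherentAmplitude p n := by
  unfold coherentAmplitude; positivity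

theorem coherentAmplitude_sq {p : ℝ} (hp : 0 ≤ p) (n : ℕ) :
    coherentAmplitude p n ^ 2 = Real.exp (-p) * (p ^ n / n !) := by
  rw [coherentAmplitude, div_pow, mul_pow, ← pow_mul, mul_comm n, pow_mul,
    Real.sq_sqrt hp, Real.sq_sqrt (Nat.cast_nonneg _), ← Real.exp_nat_mul]
  push_cast
  ring_nf

theorem summable_coherentAmplitude_sq {p : ℝ} (hp : 0 ≤ p) :
    Summable fun n => coherentAmplitude p n ^ 2 := by
  simpa only [coherentAmplitude_sq hp] using (Real.summable_pow_div_factorial p).mul_left _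

theorem HilbertBasis.inner_coherentState {H : Type*} [NormedAddCommGroup H]
    [InnerProductSpace ℂ H] (b : HilbertBasis ℕ ℂ H) {p : ℝ} (hp : 0 ≤ p) {N : ℕ} (k : Fin N)
    (n : ℕ) :
    ⟪b n, ∑' m : ℕ, ((coherentAmplitude p m : ℂ) * exp (2 * π * I * k * m / N)) • b m⟫_ℂ
      = coherentAmplitude p n * exp (2 * π * I * k * n / N) := by
  refine b.inner_tsum_smul ((summable_coherentAmplitude_sq hp).congr fun m => ?_) n
  rw [norm_mul, Complex.norm_exp, mul_pow, Complex.norm_real, Real.norm_eq_abs, sq_abs]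
  simp

theorem tsum_coherentAmplitude_sq_le {p : ℝ} (hp : 0 ≤ p) {N : ℕ} (hN : 0 < N) (j : ℕ) :
    ∑' u : ℕ, coherentAmplitude p (u * N + j) ^ 2
      ≤ coherentAmplitude p j ^ 2 * (1 + ∑' u : ℕ, p ^ ((u + 1) * N) / ((u + 1) * N)!) := by
  simp only [coherentAmplitude_sq hp, tsum_mul_left, mul_assoc]
  gcongr
  exact tsum_pow_div_factorial_mul_add_le hp hN j

theorem sq_le_of_le_add_of_sq_le {r ε d ν : ℝ} (hν : 0 ≤ ν) (hε : 0 ≤ ε) (hε1 : ε ^ 2 ≤ 1)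
    (hr : 0 ≤ r) (hrd : r ≤ ε + d) (hd2 : d ^ 2 ≤ ν / (1 + ν) * (1 - ε ^ 2)) :
    r ^ 2 ≤ ν / (1 + ν) + 2 * ε * Real.sqrt (1 - ε ^ 2) + ε ^ 2 * (2 + ν) / (1 + ν) := by
  have hκ : ν / (1 + ν) ≤ 1 := (div_le_one (by positivity)).2 (by linarith)
  have hd1 : d ≤ Real.sqrt (1 - ε ^ 2) :=
    Real.le_sqrt_of_sq_le (hd2.trans (mul_le_of_le_one_left (by linarith) hκ))
  have hid : ν / (1 + ν) + ε ^ 2 * (2 + ν) / (1 + ν)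
      = ε ^ 2 + ν / (1 + ν) * (1 - ε ^ 2) + ε ^ 2 := by
    field_simp
    ring
  nlinarith [mul_le_mul_of_nonneg_left hd1 hε, pow_le_pow_left₀ hr hrd 2]

theorem stmt18_general {H : Type*} [NormedAddCommGroup H] [InnerProductSpace ℂ H] [CompleteSpace H]
    (hb : HilbertBasis ℕ ℂ H)
    (N : ℕ) (p : ℝ) (hp : 0 < p)
    (cs : Fin N → H)
    (hcs : ∀ k : Fin N, cs k = ∑' n : ℕ,
      (((Real.exp (-p / 2) * Real.sqrt p ^ n / Real.sqrt (Nat.factorial n) : ℝ) : ℂ) *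
        Complex.exp (2 * Real.pi * Complex.I * (k : ℂ) * (n : ℂ) / (N : ℂ))) • hb n)
    (P : H →L[ℂ] H)
    (hPmem : ∀ v : H, P v ∈ Submodule.span ℂ (Set.range cs))
    (hPorth : ∀ v : H, v - P v ∈ (Submodule.span ℂ (Set.range cs))ᗮ)
    (ψ : H) (hψ : ‖ψ‖ = 1)
    (ε : ℝ) (hε : ε = ‖ψ - ∑ n ∈ Finset.range N, (inner ℂ (hb n) ψ : ℂ) • hb n‖)
    (ν₀ : ℝ) (hν₀ : ν₀ = ∑' u : ℕ, p ^ ((u + 1) * N) / Nat.factorial ((u + 1) * N)) :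
    ‖ψ - P ψ‖ ^ 2 ≤ ν₀ / (1 + ν₀) + 2 * ε * Real.sqrt (1 - ε ^ 2) +
      ε ^ 2 * (2 + ν₀) / (1 + ν₀) := by
  set ψN := ∑ n ∈ Finset.range N, ⟪hb n, ψ⟫_ℂ • hb n
  have hv : ∀ j : Fin N, ∀ n,
      ⟪hb n, dft cs j⟫_ℂ = if n % N = j then (coherentAmplitude p n : ℂ) else 0 :=
    fun j n => inner_dft (fun k => by rw [hcs k]; exact hb.inner_coherentState hp.le k n) j
  have hvle : ∀ j : Fin N, ‖dft cs j‖ ^ 2 ≤ coherentAmplitude p j ^ 2 * (1 + ν₀) := fun j => by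
    rw [norm_sq_eq_tsum_of_inner_eq_ite hb hv, hν₀]
    exact tsum_coherentAmplitude_sq_le hp.le j.pos j
  obtain ⟨w, hw, hψNw⟩ := exists_mem_span_norm_sub_sq_le hb hv
    (fun j => (coherentAmplitude_pos hp j).ne') hvle fun j => ⟪hb j, ψ⟫_ℂ
  rw [Fin.sum_univ_eq_sum_range (fun n => ⟪hb n, ψ⟫_ℂ • hb n)] at hψNw
  have hwcs : w ∈ Submodule.span ℂ (Set.range cs) :=
    Submodule.span_le.2 (Set.range_subset_iff.2 (dft_mem_span cs)) hw
  have hpyth := hb.orthonormal.norm_sum_inner_smul_sq_add (Finset.range N) ψ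
  rw [hψ, ← hε, one_pow] at hpyth
  have hν₀_nonneg : 0 ≤ ν₀ := hν₀ ▸ tsum_nonneg fun u => by positivity
  refine sq_le_of_le_add_of_sq_le hν₀_nonneg (hε ▸ norm_nonneg _) (by linarith [sq_nonneg ‖ψN‖])
    (norm_nonneg _) ?_ (by rwa [← eq_sub_of_add_eq hpyth])
  calc ‖ψ - P ψ‖ ≤ ‖ψ - w‖ :=
        norm_sub_le_norm_sub_of_mem_orthogonal (hPmem ψ) (hPorth ψ) hwcs
    _ ≤ ‖ψ - ψN‖ + ‖ψN - w‖ := norm_sub_le_norm_sub_add_norm_sub ψ ψN w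
    _ = ε + ‖ψN - w‖ := by rw [← hε]

theorem stmt18 {H : Type*} [NormedAddCommGroup H] [InnerProductSpace ℂ H] [CompleteSpace H]
    (hb : HilbertBasis ℕ ℂ H)
    (N : ℕ) (hN : 0 < N) (p : ℝ) (hp : 0 < p)
    (cs : Fin N → H)
    (hcs : ∀ k : Fin N, cs k = ∑' n : ℕ,
      (((Real.exp (-p / 2) * Real.sqrt p ^ n / Real.sqrt (Nat.factorial n) : ℝ) : ℂ) *
        Complex.exp (2 * Real.pi * Complex.I * (k : ℂ) * (n : ℂ) / (N : ℂ))) • hb n)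
    (P : H →L[ℂ] H)
    (hPmem : ∀ v : H, P v ∈ Submodule.span ℂ (Set.range cs))
    (hPorth : ∀ v : H, v - P v ∈ (Submodule.span ℂ (Set.range cs))ᗮ)
    (ψ : H) (hψ : ‖ψ‖ = 1)
    (ε : ℝ) (hε : ε = ‖ψ - ∑ n ∈ Finset.range N, (inner ℂ (hb n) ψ : ℂ) • hb n‖)
    (ν₀ : ℝ) (hν₀ : ν₀ = ∑' u : ℕ, p ^ ((u + 1) * N) / Nat.factorial ((u + 1) * N)) :
    ‖ψ - P ψ‖ ^ 2 ≤ ν₀ / (1 + ν₀) + 2 * ε * Real.sqrt (1 - ε ^ 2) +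
      ε ^ 2 * (2 + ν₀) / (1 + ν₀) :=
  stmt18_general hb N p hp cs hcs P hPmem hPorth ψ hψ ε hε ν₀ hν₀
end
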